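/- arXiv:2211.09506 — 5 statements merged into one kernel-verified Lean document; each statement's English description precedes it below -/
import Mathlib

section
/- For every quaternion q and every natural number n ≥ 1, the Fueter operator applied to q^n equals the conjugate Fueter operator applied to q̄^n, i.e. D(q^n) = D̄(q̄^n), where D = ∂_{q0} + e1 ∂_{q1} + e2 ∂_{q2} + e3 ∂_{q3} and D̄ = ∂_{q0} - e1 ∂_{q1} - e2 ∂_{q2} - e3 ∂_{q3}. -/
/-!
The derivative of `x ↦ x ^ n` at `q` is `v ↦ ∑ q^(n-1-i) v q^i`, and that of `x ↦ x̄ ^ n` is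
`v ↦ ∑ q̄^(n-1-i) v̄ q̄^i`. Feeding these into `D` and `D̄` and using
`x + e1 x e1 + e2 x e2 + e3 x e3 = -2 x̄` term by term gives
`D(q^n) = -2 ∑ q̄^(n-1-i) q^i` and `D̄(q̄^n) = -2 ∑ q^(n-1-i) q̄^i`,
which agree after reversing the order of summation because `q` and `q̄` commute.
-/

open scoped Quaternion

/-- The imaginary units of the quaternions. -/
def e1 : ℍ[ℝ] := ⟨0,1,0,0⟩
def e2 : ℍ[ℝ] := ⟨0,0,1,0⟩
def e3 : ℍ[ℝ] := ⟨0,0,0,1⟩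

/-- The Fueter operator `D = ∂_{q0} + e1 ∂_{q1} + e2 ∂_{q2} + e3 ∂_{q3}`,
where `∂_{q_i}` is the directional derivative in the direction of the `i`-th unit. -/
noncomputable def fueterD (f : ℍ[ℝ] → ℍ[ℝ]) (q : ℍ[ℝ]) : ℍ[ℝ] :=
  fderiv ℝ f q 1 + e1 * fderiv ℝ f q e1 + e2 * fderiv ℝ f q e2 + e3 * fderiv ℝ f q e3

/-- The conjugate Fueter operator `D̄ = ∂_{q0} - e1 ∂_{q1} - e2 ∂_{q2} - e3 ∂_{q3}`. -/
noncomputable def fueterDbar (f : ℍ[ℝ] → ℍ[ℝ]) (q : ℍ[ℝ]) : ℍ[ℝ] :=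
  fderiv ℝ f q 1 - e1 * fderiv ℝ f q e1 - e2 * fderiv ℝ f q e2 - e3 * fderiv ℝ f q e3

open Finset

instance {R : Type*} [CommRing R] [StarRing R] [TrivialStar R] : StarModule R ℍ[R] :=
  ⟨fun r a => by rw [Quaternion.star_smul, star_trivial r]⟩

section
variable {𝕜 𝔸 : Type*} [NontriviallyNormedField 𝕜] [NormedRing 𝔸] [NormedAlgebra 𝕜 𝔸]

theorem fderiv_pow_apply (n : ℕ) (q v : 𝔸) :
    fderiv 𝕜 (fun x : 𝔸 => x ^ n) q v = ∑ i ∈ range n, q ^ (n - 1 - i) * v * q ^ i := by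
  simp [fderiv_pow_ring', mul_assoc, Nat.pred_eq_sub_one]

theorem fderiv_star_pow_apply [StarRing 𝕜] [TrivialStar 𝕜] [StarRing 𝔸] [StarModule 𝕜 𝔸]
    [ContinuousStar 𝔸] (n : ℕ) (q v : 𝔸) :
    fderiv 𝕜 (fun x : 𝔸 => star x ^ n) q v
      = ∑ i ∈ range n, star q ^ (n - 1 - i) * star v * star q ^ i := by
  rw [fderiv_fun_pow' n differentiableAt_id.star, fderiv_star]
  simp [mul_assoc, Nat.pred_eq_sub_one]

end

theorem Commute.sum_range_pow_sub_mul_pow_comm {R : Type*} [Semiring R] {x y : R}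
    (h : Commute x y) (n : ℕ) :
    ∑ i ∈ range n, x ^ (n - 1 - i) * y ^ i = ∑ i ∈ range n, y ^ (n - 1 - i) * x ^ i := by
  rw [← sum_range_reflect]
  refine sum_congr rfl fun i hi => ?_
  rw [Nat.sub_sub_self (Nat.le_sub_one_of_lt (mem_range.mp hi)), (h.pow_pow _ _).eq]

theorem star_e1 : star e1 = -e1 := Quaternion.star_eq_neg.mpr rfl
theorem star_e2 : star e2 = -e2 := Quaternion.star_eq_neg.mpr rfl
theorem star_e3 : star e3 = -e3 := Quaternion.star_eq_neg.mpr rfl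

theorem self_add_sandwich_units_eq_neg_two_mul_star (x : ℍ[ℝ]) :
    x + e1 * x * e1 + e2 * x * e2 + e3 * x * e3 = -2 * star x := by
  rw [neg_mul, two_mul]
  ext <;> simp [Quaternion.re_mul, Quaternion.imI_mul, Quaternion.imJ_mul, Quaternion.imK_mul]
    <;> simp [e1, e2, e3]

section
variable {ι : Type*} {s : Finset ι} {a b : ι → ℍ[ℝ]} {f : ℍ[ℝ] → ℍ[ℝ]} {q : ℍ[ℝ]}

theorem fueterD_eq_of_fderiv_apply_eq_sum (hf : ∀ v, fderiv ℝ f q v = ∑ i ∈ s, a i * v * b i) :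
    fueterD f q = -2 * ∑ i ∈ s, star (a i) * b i := by
  simp only [fueterD, hf, mul_sum, ← sum_add_distrib]
  refine sum_congr rfl fun i _ => ?_
  rw [← mul_assoc (-2 : ℍ[ℝ]), ← self_add_sandwich_units_eq_neg_two_mul_star]
  noncomm_ring

theorem fueterDbar_eq_of_fderiv_apply_eq_sum
    (hf : ∀ v, fderiv ℝ f q v = ∑ i ∈ s, a i * star v * b i) :
    fueterDbar f q = -2 * ∑ i ∈ s, star (a i) * b i := by
  simp only [fueterDbar, hf, star_one, star_e1, star_e2, star_e3, mul_sum, ← sum_sub_distrib]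
  refine sum_congr rfl fun i _ => ?_
  rw [← mul_assoc (-2 : ℍ[ℝ]), ← self_add_sandwich_units_eq_neg_two_mul_star]
  noncomm_ring

end

theorem fueterD_pow_eq_fueterDbar_conj_pow_general (n : ℕ) (q : ℍ[ℝ]) :
    fueterD (fun x => x ^ n) q = fueterDbar (fun x => (star x) ^ n) q := by
  rw [fueterD_eq_of_fderiv_apply_eq_sum (fderiv_pow_apply n q),
    fueterDbar_eq_of_fderiv_apply_eq_sum (fderiv_star_pow_apply n q)]
  simp only [star_pow, star_star]
  rw [star_comm_self.sum_range_pow_sub_mul_pow_comm]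

/-- For every quaternion `q` and every `n ≥ 1`, `D(q^n) = D̄(q̄^n)`. -/
theorem fueterD_pow_eq_fueterDbar_conj_pow (n : ℕ) (hn : 1 ≤ n) (q : ℍ[ℝ]) :
    fueterD (fun x => x ^ n) q = fueterDbar (fun x => (star x) ^ n) q :=
  fueterD_pow_eq_fueterDbar_conj_pow_general n q
end

section
/- For every natural number n ≥ 1 and every quaternion q, the following algebraic identity holds: (Δ q^n)·q̲ + 2 D(q^n) + D̄(q^n) = 0, where q̲ = (q - q̄)/2 is the imaginary part of q, Δ q^n = -4 ∑_{k=1}^{n-1} (n-k) q^{n-k-1} q̄^{k-1}, D(q^n) = -2 ∑_{k=1}^{n} q^{n-k} q̄^{k-1}, and D̄(q^n) = 2( n q^{n-1} + ∑_{k=1}^{n} q^{n-k} q̄^{k-1} ). -/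
open Finset
open scoped Quaternion

/-!
Put `S n = ∑_{k<n} a^(n-1-k) b^k` and `T n = ∑_{k<n-1} (n-1-k) a^(n-2-k) b^k = ∂(S n)/∂a`.
At `a = q`, `b = q̄` the left-hand side is `-2 (T n (q - q̄) - n q^(n-1) + S n)`, and
`T n (a - b) = n a^(n-1) - S n` is the `a`-derivative of `S n (a - b) = a^n - b^n`. It holds for
any commuting `a`, `b` (such as `q`, `q̄`), by induction from `S (n+1) = a S n + b^n` and
`T (n+1) = a T n + S n`.
-/

section
variable {R : Type*} [Semiring R]

theorem sum_range_succ_pow_mul_pow (a b : R) (n : ℕ) :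
    ∑ k ∈ range (n + 1), a ^ (n - k) * b ^ k =
      a * ∑ k ∈ range n, a ^ (n - 1 - k) * b ^ k + b ^ n := by
  rw [sum_range_succ, mul_sum, Nat.sub_self, pow_zero, one_mul]
  congr 1
  refine sum_congr rfl fun k hk => ?_
  obtain ⟨j, rfl⟩ := Nat.exists_eq_add_of_lt (mem_range.mp hk)
  rw [show k + j + 1 - k = j + 1 by omega, show k + j + 1 - 1 - k = j by omega, pow_succ',
    mul_assoc]

theorem sum_range_natCast_mul_pow_mul_pow (a b : R) (n : ℕ) :
    ∑ k ∈ range n, ((n - k : ℕ) : R) * a ^ (n - 1 - k) * b ^ k =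
      a * ∑ k ∈ range (n - 1), ((n - 1 - k : ℕ) : R) * a ^ (n - 2 - k) * b ^ k +
        ∑ k ∈ range n, a ^ (n - 1 - k) * b ^ k := by
  rcases n with _ | m
  · simp
  simp only [Nat.add_sub_cancel]
  rw [sum_range_succ, sum_range_succ, mul_sum, ← add_assoc, ← sum_add_distrib]
  simp only [Nat.sub_self, Nat.add_sub_cancel_left, pow_zero, Nat.cast_one, one_mul, mul_one]
  congr 1
  refine sum_congr rfl fun k hk => ?_
  obtain ⟨j, rfl⟩ := Nat.exists_eq_add_of_lt (mem_range.mp hk)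
  rw [show k + j + 1 + 1 - k = j + 1 + 1 by omega, show k + j + 1 - k = j + 1 by omega,
    show k + j + 1 + 1 - 2 - k = j by omega, Nat.cast_succ, add_mul, add_mul, one_mul,
    ← mul_assoc a, ← mul_assoc a, ← (Nat.cast_commute (j + 1) a).eq, pow_succ']
  simp only [mul_assoc]

end

section
variable {R : Type*} [Ring R]

theorem Commute.sum_pow_mul_pow_mul_sub {a b : R} (h : Commute a b) (n : ℕ) :
    (∑ k ∈ range n, a ^ (n - 1 - k) * b ^ k) * (a - b) = a ^ n - b ^ n := by
  rw [← h.geom_sum₂_mul, ← sum_range_reflect]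
  refine congrArg (· * (a - b)) (sum_congr rfl fun k hk => ?_)
  rw [Nat.sub_sub_self (by have := mem_range.mp hk; omega)]

theorem Commute.sum_natCast_mul_pow_mul_pow_mul_sub {a b : R} (h : Commute a b) (n : ℕ) :
    (∑ k ∈ range (n - 1), ((n - 1 - k : ℕ) : R) * a ^ (n - 2 - k) * b ^ k) * (a - b) =
      n * a ^ (n - 1) - ∑ k ∈ range n, a ^ (n - 1 - k) * b ^ k := by
  induction n with
  | zero => simp
  | succ n ih =>
    have hpow : a * (n * a ^ (n - 1)) = n * a ^ n := by
      rcases n with _ | n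
      · simp
      · rw [← mul_assoc, ← (Nat.cast_commute _ a).eq, mul_assoc, ← pow_succ', Nat.add_sub_cancel]
    simp only [Nat.add_sub_cancel, show ∀ k, n + 1 - 2 - k = n - 1 - k from fun k => by omega]
    rw [sum_range_natCast_mul_pow_mul_pow, add_mul, mul_assoc, ih, h.sum_pow_mul_pow_mul_sub,
      sum_range_succ_pow_mul_pow, mul_sub, hpow]
    push_cast
    noncomm_ring

end

theorem laplacian_fueter_identity_general (n : ℕ) (q : ℍ[ℝ]) :
    (-4 * ∑ k ∈ Finset.range (n - 1),
        ((n - 1 - k : ℕ) : ℍ[ℝ]) * q ^ (n - 2 - k) * (star q) ^ k) * ((q - star q) / 2) +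
      2 * (-2 * ∑ k ∈ Finset.range n, q ^ (n - 1 - k) * (star q) ^ k) +
      2 * ((n : ℍ[ℝ]) * q ^ (n - 1) +
        ∑ k ∈ Finset.range n, q ^ (n - 1 - k) * (star q) ^ k) = 0 := by
  have : CharZero ℍ[ℝ] := charZero_of_injective_algebraMap (algebraMap ℝ ℍ[ℝ]).injective
  have half (T x : ℍ[ℝ]) : -4 * T * (x / 2) = -2 * (T * x) := by
    rw [← mul_div_assoc, mul_assoc, div_eq_mul_inv, mul_assoc,
      ← (Commute.ofNat_left 2 (T * x)).inv_left₀.eq, ← mul_assoc]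
    norm_num
  rw [half, Commute.sum_natCast_mul_pow_mul_pow_mul_sub (star_comm_self' q).symm]
  noncomm_ring

/-- For `n ≥ 1` and every quaternion `q`, the identity
`(Δ q^n)·q̲ + 2 D(q^n) + D̄(q^n) = 0` holds, where `q̲ = (q - q̄)/2` and
`Δ q^n = -4 ∑_{k=1}^{n-1} (n-k) q^{n-k-1} q̄^{k-1}`,
`D(q^n) = -2 ∑_{k=1}^{n} q^{n-k} q̄^{k-1}`,
`D̄(q^n) = 2 (n q^{n-1} + ∑_{k=1}^{n} q^{n-k} q̄^{k-1})`. -/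
theorem laplacian_fueter_identity (n : ℕ) (hn : 1 ≤ n) (q : ℍ[ℝ]) :
    (-4 * ∑ k ∈ Finset.range (n - 1),
        ((n - 1 - k : ℕ) : ℍ[ℝ]) * q ^ (n - 2 - k) * (star q) ^ k) * ((q - star q) / 2) +
      2 * (-2 * ∑ k ∈ Finset.range n, q ^ (n - 1 - k) * (star q) ^ k) +
      2 * ((n : ℍ[ℝ]) * q ^ (n - 1) +
        ∑ k ∈ Finset.range n, q ^ (n - 1 - k) * (star q) ^ k) = 0 :=
  laplacian_fueter_identity_general n q
end

section
/- For every natural number n ≥ 1 and every quaternion q, Δ(q^{n+1}) = (Δ q^n)·q0 - D̄(q^n), where q0 is the real part of q, Δ q^m = -4 ∑_{k=1}^{m-1} (m-k) q^{m-k-1} q̄^{k-1}, and D̄(q^n) = 2( n q^{n-1} + ∑_{k=1}^{n} q^{n-k} q̄^{k-1} ). -/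
/-!
With `Hₙ = ∑_{k<n} a^(n-1-k) b^k` and `Lₙ = ∑_{k<n} (n-k) a^(n-1-k) b^k`, so that
`Δ(qⁿ⁺¹) = -4 Lₙ` and `D̄(qⁿ) = 2 (n qⁿ⁻¹ + Hₙ)` for `a = q`, `b = q̄`, peeling off the
first or the last factor gives `Lₙ₊₁ = a Lₙ + Hₙ₊₁ = Lₙ b + (n+1) aⁿ`. If `a` and `b` commute,
adding the two yields `2 Lₙ₊₁ = Lₙ (a + b) + (n+1) aⁿ + Hₙ₊₁`, and `q + q̄ = 2 q₀` is central.
-/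

open scoped Quaternion
open Finset

section Semiring

variable {R : Type*} [Semiring R]

def homSum (a b : R) (n : ℕ) : R :=
  ∑ k ∈ range n, a ^ (n - 1 - k) * b ^ k

def weightedHomSum (a b : R) (n : ℕ) : R :=
  ∑ k ∈ range n, ((n - k : ℕ) : R) * a ^ (n - 1 - k) * b ^ k

theorem weightedHomSum_succ_eq_mul_add_homSum (a b : R) (n : ℕ) :
    weightedHomSum a b (n + 1) = a * weightedHomSum a b n + homSum a b (n + 1) := by
  simp only [weightedHomSum, homSum, mul_sum, sum_range_succ, ← add_assoc,
    ← sum_add_distrib]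
  congr 1
  · refine sum_congr rfl fun k hk => ?_
    have hkn : k < n := mem_range.mp hk
    rw [show n + 1 - k = n - k + 1 by omega, show n + 1 - 1 - k = n - 1 - k + 1 by omega,
      Nat.cast_succ, pow_succ']
    simp only [add_mul, one_mul, mul_assoc, (Nat.cast_commute (n - k) a).left_comm]
  · simp

theorem weightedHomSum_succ_eq_mul_add_pow (a b : R) (n : ℕ) :
    weightedHomSum a b (n + 1) = weightedHomSum a b n * b + ((n + 1 : ℕ) : R) * a ^ n := by
  rw [weightedHomSum, sum_range_succ', weightedHomSum, sum_mul]
  congr 1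
  · refine sum_congr rfl fun k hk => ?_
    have hkn : k < n := mem_range.mp hk
    rw [show n + 1 - (k + 1) = n - k by omega, show n + 1 - 1 - (k + 1) = n - 1 - k by omega,
      pow_succ, ← mul_assoc]
  · simp

theorem Commute.two_mul_weightedHomSum_succ {a b : R} (hab : Commute a b) (n : ℕ) :
    2 * weightedHomSum a b (n + 1) =
      weightedHomSum a b n * (a + b) + ((n + 1 : ℕ) : R) * a ^ n + homSum a b (n + 1) := by
  have hcomm : Commute a (weightedHomSum a b n) :=
    Commute.sum_right _ _ _ fun k _ =>
      (((Nat.cast_commute _ a).symm.mul_right ((Commute.refl a).pow_right _))).mul_right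
        (hab.pow_right k)
  calc 2 * weightedHomSum a b (n + 1)
      = weightedHomSum a b (n + 1) + weightedHomSum a b (n + 1) := two_mul _
    _ = _ := by
      nth_rw 1 [weightedHomSum_succ_eq_mul_add_homSum]
      rw [weightedHomSum_succ_eq_mul_add_pow, hcomm.eq, mul_add]
      abel

end Semiring

theorem laplacian_pow_succ_general (n : ℕ) (q : ℍ[ℝ]) :
    -4 * ∑ k ∈ Finset.range n, ((n - k : ℕ) : ℍ[ℝ]) * q ^ (n - 1 - k) * (star q) ^ k =
      (-4 * ∑ k ∈ Finset.range (n - 1),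
          ((n - 1 - k : ℕ) : ℍ[ℝ]) * q ^ (n - 2 - k) * (star q) ^ k) * ((q.re : ℝ) : ℍ[ℝ]) -
        2 * ((n : ℍ[ℝ]) * q ^ (n - 1) +
          ∑ k ∈ Finset.range n, q ^ (n - 1 - k) * (star q) ^ k) := by
  rcases n with _ | m
  · simp
  have hq : Commute q (star q) := (star_comm_self' q).symm
  change -4 * weightedHomSum q (star q) (m + 1) =
    -4 * weightedHomSum q (star q) m * (q.re : ℍ[ℝ]) -
      2 * (((m + 1 : ℕ) : ℍ[ℝ]) * q ^ m + homSum q (star q) (m + 1))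
  calc -4 * weightedHomSum q (star q) (m + 1)
      = -2 * (2 * weightedHomSum q (star q) (m + 1)) := by rw [← mul_assoc]; norm_num
    _ = _ := by
      rw [hq.two_mul_weightedHomSum_succ, Quaternion.self_add_star]
      noncomm_ring

/-- For `n ≥ 1` and every quaternion `q`, `Δ(q^{n+1}) = (Δ q^n)·q0 - D̄(q^n)`,
where `q0 = Re(q)`, `Δ q^m = -4 ∑_{k=1}^{m-1} (m-k) q^{m-k-1} q̄^{k-1}` and
`D̄(q^n) = 2 (n q^{n-1} + ∑_{k=1}^{n} q^{n-k} q̄^{k-1})`. -/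
theorem laplacian_pow_succ (n : ℕ) (hn : 1 ≤ n) (q : ℍ[ℝ]) :
    -4 * ∑ k ∈ Finset.range n, ((n - k : ℕ) : ℍ[ℝ]) * q ^ (n - 1 - k) * (star q) ^ k =
      (-4 * ∑ k ∈ Finset.range (n - 1),
          ((n - 1 - k : ℕ) : ℍ[ℝ]) * q ^ (n - 2 - k) * (star q) ^ k) * ((q.re : ℝ) : ℍ[ℝ]) -
        2 * ((n : ℍ[ℝ]) * q ^ (n - 1) +
          ∑ k ∈ Finset.range n, q ^ (n - 1 - k) * (star q) ^ k) :=
  laplacian_pow_succ_general n q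
end

section
/- Let f : Ω → H be a left slice hyperholomorphic function on a connected axially symmetric open set Ω ⊆ H containing a real point, and suppose f admits a convergent power series expansion f(q) = ∑_{k≥0} q^k α_k on a ball B_r(0) ⊆ Ω. If D̄ f = 0 on Ω (with D̄ applied via its closed-form action D̄(q^k) = 2(k q^{k-1} + ∑_{s=1}^{k} q^{k-s} q̄^{s-1}) on monomials), then α_k = 0 for all k ≥ 1, i.e. f is constant. -/
/-! On the real axis `q̄ = q`, so the closed form of `D̄ (q ^ (m + 1))` collapses to the real
multiple `2 (m + 1) x ^ m` of `x ^ m`, and the kernel condition restricted to real `x` says that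
the real power series `∑ x ^ m • 2 (m + 1) α (m + 1)` vanishes near `0`. By uniqueness of
power series expansions all its coefficients vanish. -/

open scoped Quaternion

open Finset

section PowerSeries

variable {𝕜 E : Type*} [NontriviallyNormedField 𝕜] [NormedAddCommGroup E] [NormedSpace 𝕜 E]

theorem eq_zero_of_hasSum_pow_smul_eq_zero {β : ℕ → E} {r : ℝ} (hr : 0 < r)
    (h : ∀ x : 𝕜, ‖x‖ < r → HasSum (fun n => x ^ n • β n) 0) (n : ℕ) : β n = 0 := by
  obtain ⟨x, hx₀, hxr⟩ := NormedField.exists_norm_lt 𝕜 hr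
  set p : FormalMultilinearSeries 𝕜 𝕜 E :=
    fun n => ContinuousMultilinearMap.mkPiRing 𝕜 (Fin n) (β n)
  have hp : ∀ n (y : 𝕜), (p n fun _ => y) = y ^ n • β n := by
    simp [p, ContinuousMultilinearMap.mkPiRing_apply]
  have hradius : (‖x‖₊ : ENNReal) ≤ p.radius := by
    refine p.le_radius_of_tendsto (l := 0) ?_
    convert (h x hxr).summable.tendsto_atTop_zero.norm using 2 with n
    · rw [norm_smul, norm_pow, ContinuousMultilinearMap.norm_mkPiRing, mul_comm, coe_nnnorm]
    · exact norm_zero.symm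
  have hball : HasFPowerSeriesOnBall (fun _ => (0 : E)) p 0 ‖x‖₊ := by
    refine ⟨hradius, by simpa using hx₀, fun {y} hy => ?_⟩
    rw [Metric.mem_eball, edist_zero_right, enorm_eq_nnnorm, ENNReal.coe_lt_coe,
      ← NNReal.coe_lt_coe, coe_nnnorm, coe_nnnorm] at hy
    simpa [hp] using h y (hy.trans hxr)
  simpa [hp] using hball.hasFPowerSeriesAt.apply_eq_zero n 1

end PowerSeries

theorem sum_range_succ_pow_sub_mul_pow {R : Type*} [Semiring R] (a : R) (m : ℕ) :
    ∑ s ∈ range (m + 1), a ^ (m - s) * a ^ s = (m + 1 : ℕ) * a ^ m := by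
  rw [sum_congr rfl fun s hs => pow_sub_mul_pow a (mem_range_succ_iff.mp hs), sum_const,
    card_range, nsmul_eq_mul]

namespace Quaternion

variable {R : Type*} [CommRing R]

/-- Half of the closed form of `D̄ (q ^ (m + 1))`. -/
def halfDbarPowSucc (q : ℍ[R]) (m : ℕ) : ℍ[R] :=
  ((m + 1 : ℕ) : ℍ[R]) * q ^ m + ∑ s ∈ range (m + 1), q ^ (m - s) * star q ^ s

theorem halfDbarPowSucc_coe (x : R) (m : ℕ) :
    halfDbarPowSucc (x : ℍ[R]) m = ((2 * (m + 1) * x ^ m : R) : ℍ[R]) := by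
  rw [halfDbarPowSucc, star_coe, sum_range_succ_pow_sub_mul_pow]
  ext <;> simp <;> ring

end Quaternion

theorem dbar_kernel_power_series_constant_general (r : ℝ) (hr : 0 < r) (α : ℕ → ℍ[ℝ])
    (hker : ∀ q : ℍ[ℝ], ‖q‖ < r →
      HasSum (fun m : ℕ =>
        (((m + 1 : ℕ) : ℍ[ℝ]) * q ^ m +
          ∑ s ∈ Finset.range (m + 1), q ^ (m - s) * (star q) ^ s) * α (m + 1)) 0) :
    ∀ k : ℕ, 1 ≤ k → α k = 0 := by
  have hreal : ∀ x : ℝ, ‖x‖ < r →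
      HasSum (fun m : ℕ => x ^ m • ((2 * (m + 1) : ℝ) • α (m + 1))) 0 := by
    intro x hx
    refine (hker x (by rwa [Quaternion.norm_coe])).congr_fun fun m => ?_
    rw [← Quaternion.halfDbarPowSucc, Quaternion.halfDbarPowSucc_coe,
      Quaternion.coe_mul_eq_smul, smul_smul, mul_comm]
  intro k hk
  obtain ⟨m, rfl⟩ := Nat.exists_eq_add_of_le' hk
  exact (smul_eq_zero.mp (eq_zero_of_hasSum_pow_smul_eq_zero hr hreal m)).resolve_left
    (by positivity)

/-- If a convergent quaternionic power series `f(q) = ∑_{k≥0} q^k α_k` on a ball `B_r(0)`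
satisfies `D̄ f = 0` there — i.e., using the closed form
`D̄(q^k) = 2 (k q^{k-1} + ∑_{s=1}^{k} q^{k-s} q̄^{s-1})`, the series
`∑_{k≥1} (k q^{k-1} + ∑_{s=1}^{k} q^{k-s} q̄^{s-1}) α_k` sums to `0` for every `q` with
`‖q‖ < r` — then `α_k = 0` for all `k ≥ 1`, i.e. `f` is constant. -/
theorem dbar_kernel_power_series_constant (r : ℝ) (hr : 0 < r) (α : ℕ → ℍ[ℝ])
    (hconv : ∀ q : ℍ[ℝ], ‖q‖ < r →
      Summable (fun k : ℕ => q ^ k * α k))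
    (hker : ∀ q : ℍ[ℝ], ‖q‖ < r →
      HasSum (fun m : ℕ =>
        (((m + 1 : ℕ) : ℍ[ℝ]) * q ^ m +
          ∑ s ∈ Finset.range (m + 1), q ^ (m - s) * (star q) ^ s) * α (m + 1)) 0) :
    ∀ k : ℕ, 1 ≤ k → α k = 0 :=
  dbar_kernel_power_series_constant_general r hr α hker
end

section
/- Let p, s be quaternions with p ∉ [s] (p not in the 2-sphere of s). Define the commutative pseudo Cauchy kernel Q_{c,s}(p)^{-1} = (s² - 2 Re(p) s + |p|²)^{-1}, the left Cauchy kernel S_L^{-1}(s,p) = (s - p̄) Q_{c,s}(p)^{-1}, and the F-kernel F_L(s,p) = -4 (s - p̄) Q_{c,s}(p)^{-2}. Then F_L(s,p)·s - p·F_L(s,p) = -4 Q_{c,s}(p)^{-1}. -/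
open scoped Quaternion

/-- The 2-sphere `[s] = {x : Re x = Re s, ‖Im x‖ = ‖Im s‖}` associated to a quaternion. -/
def qSphere (s : ℍ[ℝ]) : Set ℍ[ℝ] := {x | x.re = s.re ∧ ‖x.im‖ = ‖s.im‖}

/-- The commutative pseudo Cauchy kernel denominator `Q_{c,s}(p) = s² - 2 Re(p) s + |p|²`. -/
noncomputable def Qc (s p : ℍ[ℝ]) : ℍ[ℝ] :=
  s ^ 2 - 2 * ((p.re : ℝ) : ℍ[ℝ]) * s + ((Quaternion.normSq p : ℝ) : ℍ[ℝ])

/-- The left slice hyperholomorphic Cauchy kernel `S_L^{-1}(s,p) = (s - p̄) Q_{c,s}(p)^{-1}`. -/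
noncomputable def SLinv (s p : ℍ[ℝ]) : ℍ[ℝ] := (s - star p) * (Qc s p)⁻¹

/-- The left `F`-kernel `F_L(s,p) = -4 (s - p̄) Q_{c,s}(p)^{-2}`. -/
noncomputable def FL (s p : ℍ[ℝ]) : ℍ[ℝ] := -4 * (s - star p) * ((Qc s p)⁻¹) ^ 2


/-!
`Q_{c,s}(p)` is a real polynomial in `s`, so it and its inverse commute with `s`; hence the map
`x ↦ x s - p x` passes through the right factor `Q_{c,s}(p)^{-2}` of `F_L(s,p)`. On `s - p̄` this map
gives `s² - (p + p̄) s + p p̄ = Q_{c,s}(p)`, and `Q · Q^{-2} = Q^{-1}`.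
-/

lemma Commute.mul_mul_sub_mul_mul {R : Type*} [Ring R] {s c : R} (hc : Commute s c)
    (p b : R) : b * c * s - p * (b * c) = (b * s - p * b) * c := by
  rw [mul_assoc b c s, ← hc.eq]
  noncomm_ring

lemma mul_inv_sq_eq_inv {G₀ : Type*} [GroupWithZero G₀] (a : G₀) : a * a⁻¹ ^ 2 = a⁻¹ := by
  rw [sq, ← mul_assoc]
  simpa only [inv_inv] using inv_mul_mul_self a⁻¹

lemma commute_Qc (s p : ℍ[ℝ]) : Commute s (Qc s p) :=
  (((Commute.refl s).pow_right 2).sub_right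
    (((Commute.ofNat_right s 2).mul_right (Quaternion.coe_commute _ s).symm).mul_right
      (Commute.refl s))).add_right (Quaternion.coe_commute _ s).symm

lemma sub_star_mul_sub_mul_sub_star_eq_Qc (s p : ℍ[ℝ]) :
    (s - star p) * s - p * (s - star p) = Qc s p := by
  rw [Qc, ← Quaternion.self_add_star, ← Quaternion.self_mul_star]
  noncomm_ring

theorem FL_mul_s_sub_p_mul_FL_general (s p : ℍ[ℝ]) :
    FL s p * s - p * FL s p = -4 * (Qc s p)⁻¹ := by
  have hcomm : Commute s ((Qc s p)⁻¹ ^ 2) := ((commute_Qc s p).inv_right₀).pow_right 2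
  calc FL s p * s - p * FL s p
      = (-4 * (s - star p) * s - p * (-4 * (s - star p))) * (Qc s p)⁻¹ ^ 2 :=
        hcomm.mul_mul_sub_mul_mul p _
    _ = -4 * (Qc s p * (Qc s p)⁻¹ ^ 2) := by
        rw [← sub_star_mul_sub_mul_sub_star_eq_Qc]; noncomm_ring
    _ = -4 * (Qc s p)⁻¹ := by rw [mul_inv_sq_eq_inv]

/-- For quaternions `p ∉ [s]`, one has `F_L(s,p)·s - p·F_L(s,p) = -4 Q_{c,s}(p)^{-1}`. -/
theorem FL_mul_s_sub_p_mul_FL (s p : ℍ[ℝ]) (h : p ∉ qSphere s) :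
    FL s p * s - p * FL s p = -4 * (Qc s p)⁻¹ :=
  FL_mul_s_sub_p_mul_FL_general s p
end
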